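/- arXiv:2111.07501 — 5 statements merged into one kernel-verified Lean document; each statement's English description precedes it below -/
import Mathlib

section
/- Let Q be an n×n negative definite symmetric real matrix whose off-diagonal entries are all nonnegative, defining a bilinear form ⟨x,y⟩ = xᵀQy with standard basis vectors E₁,…,Eₙ. If a vector x satisfies ⟨x, Eᵢ⟩ ≤ 0 for all i = 1,…,n, then every coordinate of x is nonnegative. -/
open Matrix

/-- Gay–Stipsicz lemma. If Q is an n×n negative definite symmetric
real matrix with nonnegative off-diagonal entries and ⟨x, Eᵢ⟩ ≤ 0 for every
standard basis vector Eᵢ, then all coordinates of x are nonnegative. -/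
theorem stmt_0 (n : ℕ) (Q : Matrix (Fin n) (Fin n) ℝ)
    (hsymm : Q.IsSymm)
    (hnegdef : ∀ y : Fin n → ℝ, y ≠ 0 → y ⬝ᵥ Q *ᵥ y < 0)
    (hoff : ∀ i j : Fin n, i ≠ j → 0 ≤ Q i j)
    (x : Fin n → ℝ)
    (hx : ∀ i : Fin n, x ⬝ᵥ Q *ᵥ (Pi.single i 1) ≤ 0) :
    ∀ i : Fin n, 0 ≤ x i := by
  set p : Fin n → ℝ := fun i => max (x i) 0 with hp
  set m : Fin n → ℝ := fun i => max (-x i) 0 with hm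
  have hmnn : ∀ i, 0 ≤ m i := fun i => le_max_right _ _
  have hpnn : ∀ i, 0 ≤ p i := fun i => le_max_right _ _
  have hpm : ∀ i, m i * p i = 0 := by
    intro i
    rcases le_total (x i) 0 with h | h
    · simp [hp, max_eq_right h]
    · simp [hm, max_eq_right (neg_nonpos_of_nonneg h)]
  have hxe : ∀ i, x i = p i - m i := by
    intro i
    rcases le_total (x i) 0 with h | h
    · simp [hp, hm, max_eq_right h, max_eq_left (neg_nonneg_of_nonpos h)]
    · simp [hp, hm, max_eq_left h, max_eq_right (neg_nonpos_of_nonneg h)]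
  -- Qx coordinates are ≤ 0
  have hQx : ∀ i, (Q *ᵥ x) i ≤ 0 := by
    intro i
    have := hx i
    rw [dotProduct_mulVec, dotProduct_single, mul_one] at this
    have hsym' : ∀ a b, Q a b = Q b a := by
      intro a b
      have := congrFun (congrFun hsymm b) a
      simpa [Matrix.transpose_apply] using this
    calc (Q *ᵥ x) i = ∑ j, Q i j * x j := rfl
      _ = ∑ j, x j * Q j i := by
          apply Finset.sum_congr rfl
          intro j _
          rw [hsym' i j, mul_comm]
      _ = x ⬝ᵥ (fun j => Q j i) := rfl
      _ ≤ 0 := this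
  -- m ⬝ᵥ Q *ᵥ m ≥ 0
  have key : 0 ≤ m ⬝ᵥ Q *ᵥ m := by
    have h1 : m ⬝ᵥ Q *ᵥ m = m ⬝ᵥ Q *ᵥ p - m ⬝ᵥ Q *ᵥ x := by
      have hxpm : x = p - m := funext fun i => by rw [Pi.sub_apply]; exact hxe i
      rw [hxpm, Matrix.mulVec_sub, dotProduct_sub]
      ring
    have h2 : m ⬝ᵥ Q *ᵥ x ≤ 0 := by
      apply Finset.sum_nonpos
      intro i _
      exact mul_nonpos_of_nonneg_of_nonpos (hmnn i) (hQx i)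
    have h3 : 0 ≤ m ⬝ᵥ Q *ᵥ p := by
      apply Finset.sum_nonneg
      intro i _
      rw [mulVec]
      rw [show m i * ((fun j => Q i j) ⬝ᵥ p) = ∑ j, m i * (Q i j * p j) by
        simp [dotProduct, Finset.mul_sum]]
      apply Finset.sum_nonneg
      intro j _
      by_cases hij : i = j
      · subst hij
        rcases mul_eq_zero.mp (hpm i) with h | h <;> rw [h] <;> ring_nf <;> simp
      · have := hoff i j hij
        positivity
    linarith
  have hm0 : m = 0 := by
    by_contra h
    exact absurd key (not_le.mpr (hnegdef m h))
  intro i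
  have : m i = 0 := congrFun hm0 i
  have : max (-x i) 0 = 0 := this
  have h2 : -x i ≤ 0 := by
    by_contra h
    push_neg at h
    rw [max_eq_left h.le] at this
    linarith
  linarith
end

section
/- Let P be an n×n negative definite symmetric real matrix with nonnegative off-diagonal entries. Then every entry of the inverse matrix P⁻¹ is nonpositive. -/
open Matrix

/-- If P is an n×n negative definite symmetric real matrix with
nonnegative off-diagonal entries, then every entry of P⁻¹ is nonpositive. -/
theorem stmt_1 (n : ℕ) (P : Matrix (Fin n) (Fin n) ℝ)
    (hsymm : P.IsSymm)
    (hnegdef : ∀ y : Fin n → ℝ, y ≠ 0 → y ⬝ᵥ P *ᵥ y < 0)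
    (hoff : ∀ i j : Fin n, i ≠ j → 0 ≤ P i j) :
    ∀ i j : Fin n, P⁻¹ i j ≤ 0 := by
  -- P is invertible
  have hinj : Function.Injective P.mulVec := by
    intro y z hyz
    by_contra hne
    have hsub : P *ᵥ (y - z) = 0 := by
      rw [Matrix.mulVec_sub, hyz, sub_self]
    have := hnegdef (y - z) (sub_ne_zero.mpr hne)
    rw [hsub, dotProduct_zero] at this
    exact lt_irrefl 0 this
  have hunit : IsUnit P := Matrix.mulVec_injective_iff_isUnit.mp hinj
  have hPinv : P * P⁻¹ = 1 :=
    Matrix.mul_nonsing_inv P ((Matrix.isUnit_iff_isUnit_det P).mp hunit)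
  intro i j
  -- the j-th column of P⁻¹
  set c : Fin n → ℝ := fun k => P⁻¹ k j with hc
  have hcol : P *ᵥ c = fun k => if k = j then 1 else 0 := by
    funext k
    have := congrFun (congrFun hPinv k) j
    simpa [Matrix.mul_apply, Matrix.mulVec, dotProduct, Matrix.one_apply, hc]
      using this
  -- positive and negative parts of c
  set p : Fin n → ℝ := fun k => max (c k) 0 with hp
  set m : Fin n → ℝ := fun k => max (-(c k)) 0 with hm
  have hpnn : ∀ k, 0 ≤ p k := fun k => le_max_right _ _
  have hmnn : ∀ k, 0 ≤ m k := fun k => le_max_right _ _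
  have hpm : ∀ k, p k * m k = 0 := by
    intro k
    rcases le_total (c k) 0 with h | h
    · simp [hp, max_eq_right h]
    · simp [hm, max_eq_right (neg_nonpos.mpr h)]
  have hcpm : c = p - m := by
    funext k
    simp only [Pi.sub_apply, hp, hm]
    rcases le_total (c k) 0 with h | h
    · rw [max_eq_right h, max_eq_left (neg_nonneg.mpr h)]; ring
    · rw [max_eq_left h, max_eq_right (neg_nonpos.mpr h)]; ring
  -- p ⬝ᵥ (P *ᵥ c) = p j ≥ 0
  have h1 : 0 ≤ p ⬝ᵥ (P *ᵥ c) := by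
    rw [hcol]
    have : p ⬝ᵥ (fun k => if k = j then (1:ℝ) else 0) = p j := by
      simp [dotProduct, mul_ite]
    rw [this]; exact hpnn j
  -- p ⬝ᵥ (P *ᵥ m) ≥ 0
  have h2 : 0 ≤ p ⬝ᵥ (P *ᵥ m) := by
    simp only [dotProduct, Matrix.mulVec]
    apply Finset.sum_nonneg
    intro a _
    rw [Finset.mul_sum]
    apply Finset.sum_nonneg
    intro b _
    rcases eq_or_ne a b with rfl | hab
    · have : p a * (P a a * m a) = (p a * m a) * P a a := by ring
      rw [this, hpm a, zero_mul]
    · exact mul_nonneg (hpnn a) (mul_nonneg (hoff a b hab) (hmnn b))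
  -- hence p ⬝ᵥ (P *ᵥ p) ≥ 0
  have h3 : 0 ≤ p ⬝ᵥ (P *ᵥ p) := by
    have : p ⬝ᵥ (P *ᵥ c) = p ⬝ᵥ (P *ᵥ p) - p ⬝ᵥ (P *ᵥ m) := by
      rw [hcpm, Matrix.mulVec_sub, dotProduct_sub]
    nlinarith [h1, h2]
  -- so p = 0
  have hpzero : p = 0 := by
    by_contra hne
    exact absurd h3 (not_le.mpr (hnegdef p hne))
  have : p i = 0 := congrFun hpzero i
  have : max (P⁻¹ i j) 0 = 0 := this
  by_contra hpos
  push_neg at hpos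
  rw [max_eq_left hpos.le] at this
  exact hpos.ne' this
end

section
/- Let P be an n×n negative definite symmetric real matrix with nonnegative off-diagonal entries, and let x ∈ ℝⁿ be a vector with all entries nonnegative. Then every entry of P⁻¹x is nonpositive. -/
open Matrix

/-- If P is negative definite symmetric with nonnegative
off-diagonal entries and x has all entries nonnegative, then every entry of
P⁻¹x is nonpositive. -/
theorem stmt_2 (n : ℕ) (P : Matrix (Fin n) (Fin n) ℝ)
    (hsymm : P.IsSymm)
    (hnegdef : ∀ y : Fin n → ℝ, y ≠ 0 → y ⬝ᵥ P *ᵥ y < 0)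
    (hoff : ∀ i j : Fin n, i ≠ j → 0 ≤ P i j)
    (x : Fin n → ℝ) (hx : ∀ i, 0 ≤ x i) :
    ∀ i, (P⁻¹ *ᵥ x) i ≤ 0 := by
  -- P has nonzero determinant
  have hdet : P.det ≠ 0 := by
    intro h
    obtain ⟨v, hv0, hv⟩ := (Matrix.exists_mulVec_eq_zero_iff).2 h
    have := hnegdef v hv0
    rw [hv] at this
    simp at this
  set y : Fin n → ℝ := P⁻¹ *ᵥ x with hy
  have hPy : P *ᵥ y = x := by
    rw [hy, Matrix.mulVec_mulVec, Matrix.mul_nonsing_inv P (isUnit_iff_ne_zero.2 hdet), Matrix.one_mulVec]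
  set yp : Fin n → ℝ := fun i => max (y i) 0 with hyp
  set ym : Fin n → ℝ := fun i => max (-(y i)) 0 with hym
  have hyp_nonneg : ∀ i, 0 ≤ yp i := fun i => le_max_right _ _
  have hym_nonneg : ∀ i, 0 ≤ ym i := fun i => le_max_right _ _
  have hsum : ∀ i, yp i = y i + ym i := by
    intro i
    simp only [hyp, hym]
    rcases le_total (y i) 0 with h | h
    · rw [max_eq_right h, max_eq_left (by linarith)]; ring
    · rw [max_eq_left h, max_eq_right (by linarith)]; ring
  have hmul0 : ∀ i, yp i * ym i = 0 := by
    intro i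
    simp only [hyp, hym]
    rcases le_total (y i) 0 with h | h
    · rw [max_eq_right h]; ring
    · rw [max_eq_right (by linarith : -(y i) ≤ 0)]; ring
  -- key: yp ⬝ᵥ P *ᵥ ym ≥ 0
  have hkey : 0 ≤ yp ⬝ᵥ P *ᵥ ym := by
    simp only [dotProduct, Matrix.mulVec, Finset.mul_sum]
    apply Finset.sum_nonneg
    intro i _
    apply Finset.sum_nonneg
    intro j _
    rcases eq_or_ne i j with rfl | hij
    · have : yp i * (P i i * ym i) = P i i * (yp i * ym i) := by ring
      rw [this, hmul0 i, mul_zero]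
    · have := hoff i j hij
      have := hyp_nonneg i
      have := hym_nonneg j
      positivity
  have hx' : 0 ≤ yp ⬝ᵥ P *ᵥ y := by
    rw [hPy]
    exact Finset.sum_nonneg fun i _ => mul_nonneg (hyp_nonneg i) (hx i)
  have hquad : 0 ≤ yp ⬝ᵥ P *ᵥ yp := by
    have h : (yp : Fin n → ℝ) = y + ym := funext hsum
    nth_rewrite 2 [h]
    rw [Matrix.mulVec_add, dotProduct_add]
    exact add_nonneg hx' hkey
  have hyp0 : yp = 0 := by
    by_contra h
    exact absurd hquad (not_le.2 (hnegdef yp h))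
  intro i
  have h0 : yp i = 0 := congrFun hyp0 i
  have h1 := le_max_left (y i) 0
  simp only [hyp] at h0
  rw [h0] at h1
  exact h1
end

section
/- Let P be an n×n negative definite symmetric real matrix with nonnegative off-diagonal entries, let k ∈ ℝⁿ have all entries nonnegative, and let w ∈ ℝⁿ have all entries strictly positive. Then kᵀ P⁻¹ w ≤ 0. -/
open Matrix

/-- For P negative definite symmetric with nonnegative
off-diagonal entries, k with nonnegative entries and w with positive entries,
one has kᵀ P⁻¹ w ≤ 0. -/
theorem stmt_3 (n : ℕ) (P : Matrix (Fin n) (Fin n) ℝ)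
    (hsymm : P.IsSymm)
    (hnegdef : ∀ y : Fin n → ℝ, y ≠ 0 → y ⬝ᵥ P *ᵥ y < 0)
    (hoff : ∀ i j : Fin n, i ≠ j → 0 ≤ P i j)
    (k w : Fin n → ℝ) (hk : ∀ i, 0 ≤ k i) (hw : ∀ i, 0 < w i) :
    k ⬝ᵥ P⁻¹ *ᵥ w ≤ 0 := by
  -- P is invertible since P *ᵥ · is injective
  have hinj : Function.Injective (P.mulVec) := by
    intro a b hab
    by_contra hne
    have h : P *ᵥ (a - b) = 0 := by
      rw [mulVec_sub, hab, sub_self]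
    have := hnegdef (a - b) (sub_ne_zero.mpr hne)
    rw [h, dotProduct_zero] at this
    exact lt_irrefl 0 this
  have hdet : IsUnit P.det := (isUnit_iff_isUnit_det P).mp (mulVec_injective_iff_isUnit.mp hinj)
  set x := P⁻¹ *ᵥ w with hx
  have hPx : P *ᵥ x = w := by
    rw [hx, mulVec_mulVec, mul_nonsing_inv P hdet, one_mulVec]
  -- positive part of x
  set xp : Fin n → ℝ := fun i => max (x i) 0 with hxp
  have hxp0 : ∀ i, 0 ≤ xp i := fun i => le_max_right _ _
  -- the key: xp ⬝ᵥ P *ᵥ xp ≥ xp ⬝ᵥ P *ᵥ x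
  have hkey : xp ⬝ᵥ P *ᵥ x ≤ xp ⬝ᵥ P *ᵥ xp := by
    have hdiff : 0 ≤ xp ⬝ᵥ P *ᵥ (xp - x) := by
      simp only [dotProduct, mulVec]
      apply Finset.sum_nonneg
      intro i _
      rw [Finset.mul_sum]
      apply Finset.sum_nonneg
      intro j _
      rcases eq_or_ne i j with rfl | hij
      · have : xp i * (xp i - x i) = 0 := by
          rcases le_or_gt 0 (x i) with h | h
          · have : xp i = x i := max_eq_left h
            rw [this]; ring
          · have : xp i = 0 := max_eq_right h.le
            rw [this]; ring
        have h2 : xp i * (P i i * (xp - x) i) = P i i * (xp i * (xp i - x i)) := by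
          simp [Pi.sub_apply]; ring
        rw [h2, this, mul_zero]
      · have h1 : 0 ≤ (xp - x) j := by
          simp [Pi.sub_apply, hxp, sub_nonneg, le_max_left]
        exact mul_nonneg (hxp0 i) (mul_nonneg (hoff i j hij) h1)
    have := mulVec_sub P xp x
    nlinarith [dotProduct_sub xp (P *ᵥ xp) (P *ᵥ x), hdiff,
      (by rw [← mulVec_sub] : xp ⬝ᵥ (P *ᵥ xp - P *ᵥ x) = xp ⬝ᵥ P *ᵥ (xp - x))]
  -- xp ⬝ᵥ w ≥ 0
  have hxw : 0 ≤ xp ⬝ᵥ w := by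
    rw [dotProduct]
    exact Finset.sum_nonneg fun i _ => mul_nonneg (hxp0 i) (hw i).le
  -- xp = 0
  have hxpzero : xp = 0 := by
    by_contra hne
    have := hnegdef xp hne
    rw [hPx] at hkey
    linarith
  -- hence x ≤ 0
  have hxle : ∀ i, x i ≤ 0 := by
    intro i
    have : max (x i) 0 = 0 := by
      have := congrFun hxpzero i; simpa [hxp] using this
    exact max_eq_right_iff.mp this
  rw [dotProduct]
  exact Finset.sum_nonpos fun i _ => mul_nonpos_of_nonneg_of_nonpos (hk i) (hxle i)
end

section
/- Let P be the r×r tridiagonal matrix with diagonal entries −b₁, …, −b_r and sub/super-diagonal entries equal to 1, where all bᵢ ≥ 2 and b₁ − 1/(b₂ − 1/(⋯ − 1/b_r)) > 1. Then P is negative definite. -/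
open Matrix

noncomputable def dseq (β : ℕ → ℝ) : ℕ → ℝ
  | 0 => β 0
  | n+1 => β (n+1) - 1 / dseq β n

lemma dseq_gt_one (β : ℕ → ℝ) (hβ : ∀ n, 2 ≤ β n) : ∀ n, 1 < dseq β n := by
  intro n
  induction n with
  | zero => simpa [dseq] using lt_of_lt_of_le one_lt_two (hβ 0)
  | succ n ih =>
      have h1 : (0:ℝ) < dseq β n := lt_trans one_pos ih
      have h2 : 1 / dseq β n < 1 := by
        rw [div_lt_one h1]; exact ih
      have := hβ (n+1)
      simp only [dseq]
      linarith

lemma key_identity (β y : ℕ → ℝ) (hd : ∀ n, 1 < dseq β n) :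
    ∀ m, ∑ i ∈ Finset.range (m+1), dseq β i * (y i - y (i+1) / dseq β i)^2
      = ∑ i ∈ Finset.range (m+1), (β i * y i ^ 2 - 2 * (y i * y (i+1)))
        + y (m+1) ^ 2 / dseq β m := by
  intro m
  induction m with
  | zero =>
      have h0 : dseq β 0 ≠ 0 := ne_of_gt (lt_trans one_pos (hd 0))
      have hb0 : β 0 = dseq β 0 := rfl
      rw [Finset.sum_range_one, Finset.sum_range_one, hb0]
      field_simp
      ring
  | succ m ih =>
      have h0 : dseq β m ≠ 0 := ne_of_gt (lt_trans one_pos (hd m))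
      have h1 : dseq β (m+1) ≠ 0 := ne_of_gt (lt_trans one_pos (hd (m+1)))
      rw [Finset.sum_range_succ, ih, Finset.sum_range_succ (n := m+1)]
      have hb : β (m+1) = dseq β (m+1) + 1 / dseq β m := by
        simp [dseq]
      rw [hb]
      field_simp
      ring


/-- Value of a Hirzebruch–Jung continued fraction [b₁, b₂, …, b_r]. -/
noncomputable def hjcf : List ℝ → ℝ
  | [] => 1
  | [b] => b
  | b :: c :: rest => b - 1 / hjcf (c :: rest)

/-- The r×r tridiagonal plumbing matrix with diagonal −bᵢ
(bᵢ ≥ 2), sub/super-diagonal entries 1, and whose continued fraction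
b₁ − 1/(b₂ − ⋯ − 1/b_r) is > 1, is negative definite. -/
theorem stmt_11 (r : ℕ) (b : Fin r → ℤ) (hb : ∀ i, 2 ≤ b i)
    (hcf : 1 < hjcf (List.ofFn fun i => (b i : ℝ)))
    (P : Matrix (Fin r) (Fin r) ℝ)
    (hdiag : ∀ i, P i i = -(b i : ℝ))
    (hadj : ∀ i j : Fin r, (i : ℕ) + 1 = j ∨ (j : ℕ) + 1 = i → P i j = 1)
    (hzero : ∀ i j : Fin r, i ≠ j → ¬((i : ℕ) + 1 = j ∨ (j : ℕ) + 1 = i) →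
      P i j = 0) :
    ∀ x : Fin r → ℝ, x ≠ 0 → x ⬝ᵥ P *ᵥ x < 0 := by
  intro x hx
  rcases Nat.eq_zero_or_pos r with hr | hr
  · subst hr
    exact absurd (Subsingleton.elim x 0) hx
  set y : ℕ → ℝ := fun n => if h : n < r then x ⟨n, h⟩ else 0 with hy
  set β : ℕ → ℝ := fun n => if h : n < r then (b ⟨n, h⟩ : ℝ) else 2 with hβ
  have hβ2 : ∀ n, 2 ≤ β n := by
    intro n
    rw [hβ]
    by_cases h : n < r
    · simp only [dif_pos h]
      exact_mod_cast hb ⟨n, h⟩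
    · simp [dif_neg h]
  have hd := dseq_gt_one β hβ2
  have hd0 : ∀ n, (0:ℝ) < dseq β n := fun n => lt_trans one_pos (hd n)
  -- Step 1: compute the quadratic form.
  have hsplit : ∀ i j : Fin r, x i * (P i j * x j) =
      (if j = i then -(b i : ℝ) * (x i * x i) else 0)
      + (if (i : ℕ) + 1 = (j : ℕ) then x i * x j else 0)
      + (if (j : ℕ) + 1 = (i : ℕ) then x i * x j else 0) := by
    intro i j
    by_cases h1 : j = i
    · subst h1
      have hne : ¬((j : ℕ) + 1 = (j : ℕ)) := Nat.succ_ne_self _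
      rw [if_pos rfl]
      simp only [if_neg hne]
      rw [hdiag]
      ring
    · rw [if_neg h1]
      by_cases h2 : (i : ℕ) + 1 = (j : ℕ)
      · rw [if_pos h2, if_neg (by omega), hadj i j (Or.inl h2)]
        ring
      · rw [if_neg h2]
        by_cases h3 : (j : ℕ) + 1 = (i : ℕ)
        · rw [if_pos h3, hadj i j (Or.inr h3)]
          ring
        · rw [if_neg h3, hzero i j (Ne.symm h1) (by tauto)]
          ring
  have hinner : ∀ i : Fin r,
      (∑ j : Fin r, if (i : ℕ) + 1 = (j : ℕ) then x i * x j else 0)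
        = x i * y ((i : ℕ) + 1) := by
    intro i
    by_cases h : (i : ℕ) + 1 < r
    · rw [Finset.sum_eq_single_of_mem (⟨(i : ℕ) + 1, h⟩ : Fin r) (Finset.mem_univ _)]
      · rw [if_pos rfl, hy]
        simp [dif_pos h]
      · intro j _ hj
        rw [if_neg]
        intro hc
        exact hj (Fin.ext hc.symm)
    · rw [Finset.sum_eq_zero, hy]
      · simp [dif_neg h]
      · intro j _
        rw [if_neg]
        have := j.isLt
        omega
  have hinner' : ∀ j : Fin r,
      (∑ i : Fin r, if (j : ℕ) + 1 = (i : ℕ) then x i * x j else 0)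
        = x j * y ((j : ℕ) + 1) := by
    intro j
    by_cases h : (j : ℕ) + 1 < r
    · rw [Finset.sum_eq_single_of_mem (⟨(j : ℕ) + 1, h⟩ : Fin r) (Finset.mem_univ _)]
      · rw [if_pos rfl, hy]
        simp only [dif_pos h]
        ring
      · intro i _ hi
        rw [if_neg]
        intro hc
        exact hi (Fin.ext hc.symm)
    · rw [Finset.sum_eq_zero, hy]
      · simp [dif_neg h]
      · intro i _
        rw [if_neg]
        have := i.isLt
        omega
  have hform : x ⬝ᵥ P *ᵥ x
      = ∑ n ∈ Finset.range r, (-(β n) * (y n * y n) + 2 * (y n * y (n+1))) := by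
    have e1 : x ⬝ᵥ P *ᵥ x = ∑ i : Fin r, ∑ j : Fin r, x i * (P i j * x j) := by
      simp [dotProduct, mulVec, Finset.mul_sum]
    rw [e1]
    have e2 : ∀ i : Fin r, ∑ j : Fin r, x i * (P i j * x j)
        = -(b i : ℝ) * (x i * x i)
          + (x i * y ((i : ℕ) + 1))
          + ∑ j : Fin r, (if (j : ℕ) + 1 = (i : ℕ) then x i * x j else 0) := by
      intro i
      calc ∑ j : Fin r, x i * (P i j * x j)
          = ∑ j : Fin r, ((if j = i then -(b i : ℝ) * (x i * x i) else 0)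
            + (if (i : ℕ) + 1 = (j : ℕ) then x i * x j else 0)
            + (if (j : ℕ) + 1 = (i : ℕ) then x i * x j else 0)) :=
            Finset.sum_congr rfl (fun j _ => hsplit i j)
        _ = (∑ j : Fin r, if j = i then -(b i : ℝ) * (x i * x i) else 0)
            + (∑ j : Fin r, if (i : ℕ) + 1 = (j : ℕ) then x i * x j else 0)
            + ∑ j : Fin r, (if (j : ℕ) + 1 = (i : ℕ) then x i * x j else 0) := by
            rw [Finset.sum_add_distrib, Finset.sum_add_distrib]
        _ = -(b i : ℝ) * (x i * x i)
            + (x i * y ((i : ℕ) + 1))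
            + ∑ j : Fin r, (if (j : ℕ) + 1 = (i : ℕ) then x i * x j else 0) := by
            rw [Finset.sum_ite_eq' Finset.univ i, if_pos (Finset.mem_univ i), hinner i]
    rw [Finset.sum_congr rfl (fun i _ => e2 i)]
    rw [Finset.sum_add_distrib, Finset.sum_comm]
    rw [Finset.sum_congr rfl (fun j (_ : j ∈ Finset.univ) => hinner' j)]
    have e3 : ∀ i : Fin r, -(b i : ℝ) * (x i * x i) + x i * y ((i : ℕ) + 1)
        + x i * y ((i : ℕ) + 1)
        = -(β (i : ℕ)) * (y (i : ℕ) * y (i : ℕ)) + 2 * (y (i : ℕ) * y ((i : ℕ) + 1)) := by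
      intro i
      have hyi : y (i : ℕ) = x i := by rw [hy]; simp [dif_pos i.isLt]
      have hbi : β (i : ℕ) = (b i : ℝ) := by rw [hβ]; simp [dif_pos i.isLt]
      rw [hyi, hbi]
      ring
    rw [← Finset.sum_add_distrib]
    rw [Finset.sum_congr rfl (fun i _ => e3 i)]
    exact Fin.sum_univ_eq_sum_range
      (fun n => -(β n) * (y n * y n) + 2 * (y n * y (n+1))) r
  -- Step 2: sum of squares.
  have hyr : y r = 0 := by rw [hy]; simp
  obtain ⟨m, hm⟩ : ∃ m, r = m + 1 := ⟨r - 1, by omega⟩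
  have hkey := key_identity β y hd m
  rw [← hm] at hkey
  rw [hyr] at hkey
  simp only [ne_eq, zero_pow, OfNat.ofNat_ne_zero, not_false_iff, zero_div, add_zero] at hkey
  have hQpos : 0 < ∑ i ∈ Finset.range r, dseq β i * (y i - y (i+1) / dseq β i)^2 := by
    rcases lt_or_eq_of_le
        (Finset.sum_nonneg (fun i (_ : i ∈ Finset.range r) =>
          mul_nonneg (le_of_lt (hd0 i)) (sq_nonneg (y i - y (i+1) / dseq β i)))) with h | h
    · exact h
    · exfalso
      have hall : ∀ i ∈ Finset.range r, dseq β i * (y i - y (i+1) / dseq β i)^2 = 0 := by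
        rw [← Finset.sum_eq_zero_iff_of_nonneg
          (fun i _ => mul_nonneg (le_of_lt (hd0 i)) (sq_nonneg _))]
        exact h.symm
      have hstep : ∀ i < r, y i = y (i+1) / dseq β i := by
        intro i hi
        have := hall i (Finset.mem_range.mpr hi)
        have h2 : (y i - y (i+1) / dseq β i)^2 = 0 := by
          rcases mul_eq_zero.mp this with h' | h'
          · exact absurd h' (ne_of_gt (hd0 i))
          · exact h'
        have := pow_eq_zero_iff (n := 2) (by norm_num) |>.mp h2
        linarith
      have hzero' : ∀ k, y (r - k) = 0 := by
        intro k
        induction k with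
        | zero => simpa using hyr
        | succ k ih =>
            by_cases hk : k < r
            · have h1 : r - (k+1) < r := by omega
              have h2 : r - (k+1) + 1 = r - k := by omega
              rw [hstep _ h1, h2, ih, zero_div]
            · have : r - (k+1) = r - k := by omega
              rw [this]; exact ih
      apply hx
      funext i
      have : y (i : ℕ) = 0 := by
        have h1 : (i : ℕ) = r - (r - (i : ℕ)) := by omega
        rw [h1]; exact hzero' _
      rw [hy] at this
      simpa [dif_pos i.isLt] using this
  rw [hform]
  have : ∑ n ∈ Finset.range r, (-(β n) * (y n * y n) + 2 * (y n * y (n+1)))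
      = -∑ i ∈ Finset.range r, (β i * y i ^ 2 - 2 * (y i * y (i+1))) := by
    rw [← Finset.sum_neg_distrib]
    exact Finset.sum_congr rfl (fun i _ => by ring)
  rw [this, ← hkey]
  linarith
end
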